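/- Let G be a finite group acting on a finite set M with quotient set M/G. Using weights e_M(x) = 1 on M and e_{M/G}([x]) = 1 on M/G, and for each conjugacy class representative g the weighted quotient data on M^g/C_G(g), the total weighted pushforward to M/G of the constant function 1 on ⊔_{(g)} M^g/C_G(g) — where a class [x] ∈ M^g/C_G(g) is weighted by the order of its stabilizer in C_G(g) — equals the constant function 1 on M/G. Concretely: for every x ∈ M, Σ over conjugacy class representatives g with M^g ∩ G·x ≠ ∅ of Σ_{[x'] ∈ (M^g ∩ G·x)/C_G(g)} 1/|Stab_{C_G(g)}(x')| = 1. -/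

import Mathlib

/-! By orbit–stabilizer, the inner sum for `g` is `|M^g ∩ G·x| / |C_G(g)|`. As `|C_G(g)|` times
the size of the class of `g` is `|G|`, and `|M^g ∩ G·x|` depends only on the class of `g`, the
outer sum becomes `(1/|G|) Σ_{g ∈ G} |(G·x)^g|`, which is `1` by Burnside's lemma for the transitive
action of `G` on `G·x`. -/

/-- The fixed locus of `g` intersected with the `G`-orbit of `x`, as a subtype. -/
def FixedInOrbit (G M : Type*) [Group G] [MulAction G M] (g : G) (x : M) : Type _ :=
  {y : M // g • y = y ∧ y ∈ MulAction.orbit G x}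

/-- The centralizer `C_G(g)` acts on `M^g ∩ G·x`. -/
instance FixedInOrbit.mulAction (G M : Type*) [Group G] [MulAction G M]
    (g : G) (x : M) :
    MulAction (Subgroup.centralizer ({g} : Set G)) (FixedInOrbit G M g x) where
  smul h y := ⟨(h : G) • y.1,
    by
      obtain ⟨hy1, hy2⟩ := y.2
      constructor
      · have hc : g * (h : G) = (h : G) * g :=
          Subgroup.mem_centralizer_iff.mp h.2 g rfl
        calc g • (h : G) • y.1 = (g * (h : G)) • y.1 := (mul_smul _ _ _).symm
          _ = ((h : G) * g) • y.1 := by rw [hc]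
          _ = (h : G) • g • y.1 := mul_smul _ _ _
          _ = (h : G) • y.1 := by rw [hy1]
      · obtain ⟨k, hk⟩ := MulAction.mem_orbit_iff.mp hy2
        exact MulAction.mem_orbit_iff.mpr ⟨(h : G) * k, by rw [mul_smul, hk]⟩⟩
  one_smul y := Subtype.ext (one_smul G y.1)
  mul_smul a b y := Subtype.ext (mul_smul (a : G) (b : G) y.1)

open MulAction

namespace MulAction

theorem sum_one_div_card_stabilizer (H X : Type*) [Group H] [Finite H] [MulAction H X]
    [Finite X] :
    ∑ᶠ ω : Quotient (orbitRel H X), (1 : ℚ) / Nat.card (stabilizer H ω.out)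
      = Nat.card X / Nat.card H := by
  have orbit_stabilizer : ∀ y : X,
      (1 : ℚ) / Nat.card (stabilizer H y) = Nat.card (orbit H y) / Nat.card H := by
    intro y
    have : Nonempty (orbit H y) := ⟨⟨y, mem_orbit_self y⟩⟩
    have : (Nat.card (orbit H y) : ℚ) ≠ 0 := by exact_mod_cast Nat.card_pos.ne'
    rw [← Subgroup.card_mul_index (stabilizer H y), index_stabilizer, ← Nat.card_coe_set_eq]
    push_cast
    field_simp
  have := Fintype.ofFinite (Quotient (orbitRel H X))
  simp_rw [finsum_eq_sum_of_fintype, orbit_stabilizer, ← Finset.sum_div]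
  rw [Nat.card_congr (selfEquivSigmaOrbits H X), Nat.card_sigma, Nat.cast_sum]

theorem card_fixedBy_conj {G X : Type*} [Group G] [MulAction G X] (g h : G) :
    Nat.card (fixedBy X (h * g * h⁻¹)) = Nat.card (fixedBy X g) := by
  rw [← smul_fixedBy, Nat.card_coe_set_eq, Nat.card_coe_set_eq, Set.ncard_smul_set]

theorem sum_card_fixedBy_of_isPretransitive (G X : Type*) [Group G] [Fintype G]
    [MulAction G X] [IsPretransitive G X] [Nonempty X] :
    ∑ g : G, Nat.card (fixedBy X g) = Nat.card G := by
  classical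
  obtain ⟨x₀⟩ := ‹Nonempty X›
  have : Finite X := Finite.of_surjective (· • x₀) (exists_smul_eq G x₀)
  have := Fintype.ofFinite X
  have : Unique (orbitRel.Quotient G X) :=
    @uniqueOfSubsingleton _ ((pretransitive_iff_subsingleton_quotient G X).mp ‹_›) ⟦x₀⟧
  simp_rw [Nat.card_eq_fintype_card]
  rw [sum_card_fixedBy_eq_card_orbits_mul_card_group, Fintype.card_unique, one_mul]

end MulAction

theorem ConjClasses.card_carrier_mul_card_centralizer {G : Type*} [Group G] (g : G) :
    Nat.card (ConjClasses.mk g).carrier * Nat.card (Subgroup.centralizer {g}) = Nat.card G := by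
  rw [← ConjAct.orbit_eq_carrier_conjClasses, Subgroup.nat_card_centralizer_nat_card_stabilizer,
    Nat.card_coe_set_eq, ← index_stabilizer, mul_comm, Subgroup.card_mul_index]
  rfl

theorem ConjClasses.sum_div_card_centralizer {G : Type*} [Group G] [Fintype G]
    [Fintype (ConjClasses G)] (f : G → ℚ) (hf : ∀ g h : G, f (h * g * h⁻¹) = f g) :
    ∑ c : ConjClasses G, f c.out / Nat.card (Subgroup.centralizer {c.out})
      = (∑ g : G, f g) / Nat.card G := by
  classical
  have fiber_sum : ∀ c : ConjClasses G, f c.out / Nat.card (Subgroup.centralizer {c.out})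
      = (∑ g ∈ Finset.univ.filter (ConjClasses.mk · = c), f g) / Nat.card G := by
    intro c
    have mk_out : ConjClasses.mk c.out = c := Quotient.out_eq c
    have f_const : ∀ g ∈ Finset.univ.filter (ConjClasses.mk · = c), f g = f c.out := by
      intro g hg
      have : IsConj c.out g :=
        ConjClasses.mk_eq_mk_iff_isConj.mp (mk_out.trans (Finset.mem_filter.mp hg).2.symm)
      obtain ⟨h, rfl⟩ := isConj_iff.mp this
      exact hf _ h
    have card_fiber : (Finset.univ.filter (ConjClasses.mk · = c)).card = Nat.card c.carrier := by
      rw [← Fintype.card_subtype, ← Nat.card_eq_fintype_card]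
      exact Nat.card_congr (Equiv.subtypeEquivRight fun g => ConjClasses.mem_carrier_iff_mk_eq.symm)
    have : Nonempty c.carrier := ⟨⟨c.out, ConjClasses.mem_carrier_iff_mk_eq.mpr mk_out⟩⟩
    have : (Nat.card c.carrier : ℚ) ≠ 0 := by exact_mod_cast Nat.card_pos.ne'
    rw [Finset.sum_congr rfl f_const, Finset.sum_const, nsmul_eq_mul, card_fiber,
      ← ConjClasses.card_carrier_mul_card_centralizer c.out, mk_out]
    push_cast
    field_simp
  rw [Finset.sum_congr rfl fun c _ => fiber_sum c, ← Finset.sum_div, Finset.sum_fiberwise]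

def FixedInOrbit.equivFixedBy {G M : Type*} [Group G] [MulAction G M] (g : G) (x : M) :
    FixedInOrbit G M g x ≃ fixedBy (orbit G x) g where
  toFun y := ⟨⟨y.1, y.2.2⟩, Subtype.ext y.2.1⟩
  invFun z := ⟨z.1.1, congrArg Subtype.val z.2, z.1.2⟩

instance FixedInOrbit.finite {G M : Type*} [Group G] [MulAction G M] [Finite M] (g : G) (x : M) :
    Finite (FixedInOrbit G M g x) :=
  Finite.of_equiv _ (FixedInOrbit.equivFixedBy g x).symm

/-- Proposition 3.3 of the paper at the level of finite group actions: for every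
`x ∈ M`, summing over conjugacy class representatives `g` and over the
`C_G(g)`-orbit classes `[x']` of `M^g ∩ G·x` the quantities `1/|Stab_{C_G(g)}(x')|`
gives `1`. -/
theorem sum_over_inertia_orbits_eq_one
    (G M : Type*) [Group G] [Fintype G] [DecidableEq G] [Fintype M] [MulAction G M]
    (x : M) :
    ∑ c : ConjClasses G,
      ∑ᶠ S : Quotient (MulAction.orbitRel
          (Subgroup.centralizer ({Quotient.out c} : Set G))
          (FixedInOrbit G M (Quotient.out c) x)),
        (1 : ℚ) / Nat.card (MulAction.stabilizer
          (Subgroup.centralizer ({Quotient.out c} : Set G)) (Quotient.out S)) = 1 := by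
  have mass_formula : ∀ g : G,
      ∑ᶠ S : Quotient (orbitRel (Subgroup.centralizer {g}) (FixedInOrbit G M g x)),
        (1 : ℚ) / Nat.card (stabilizer (Subgroup.centralizer {g}) S.out)
      = Nat.card (fixedBy (orbit G x) g) / Nat.card (Subgroup.centralizer {g}) := fun g => by
    rw [sum_one_div_card_stabilizer, Nat.card_congr (FixedInOrbit.equivFixedBy g x)]
  have : Nonempty (orbit G x) := ⟨⟨x, mem_orbit_self x⟩⟩
  have hG : (Nat.card G : ℚ) ≠ 0 := by exact_mod_cast Nat.card_pos.ne'
  rw [Finset.sum_congr rfl fun c _ => mass_formula c.out,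
    ConjClasses.sum_div_card_centralizer (fun g => (Nat.card (fixedBy (orbit G x) g) : ℚ))
      fun g h => by exact_mod_cast card_fixedBy_conj g h,
    ← Nat.cast_sum, sum_card_fixedBy_of_isPretransitive, div_self hG]
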